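/- arXiv:2404.04380 — 3 statements merged into one kernel-verified Lean document; each statement's English description precedes it below -/
import Mathlib

section
/- Let G be a finite connected simple graph with at least one edge. The edge ideal I(G) is Lyubeznik — i.e., there exists a total order ≻ on mingens(I(G)) such that no Lyubeznik-critical subset has a bridge (equivalently, the associated Lyubeznik resolution is minimal) — if and only if G is isomorphic to L(a,b,c) for some nonnegative integers a, b, c. -/
open scoped Classical

noncomputable section

namespace ChauHaMaithani

variable {V : Type*}

/-- The lcm of a finite set of monomials (exponent vectors): pointwise maximum. -/
def mlcm (σ : Finset (V → ℕ)) : V → ℕ := fun v => σ.sup fun g => g v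

/-- `m` is a bridge of `σ`: `m ∈ σ` and dropping `m` does not change the lcm. -/
def IsBridge (σ : Finset (V → ℕ)) (m : V → ℕ) : Prop :=
  m ∈ σ ∧ mlcm (σ.erase m) = mlcm σ

/-- `m` is a gap of `σ`: `m ∉ σ` and adding `m` does not change the lcm. -/
def IsGap (σ : Finset (V → ℕ)) (m : V → ℕ) : Prop :=
  m ∉ σ ∧ mlcm (insert m σ) = mlcm σ

/-- A total order `≻` on monomials is encoded by a ranking function `ord`:
`m ≻ m'` iff `ord m' < ord m` (injectivity on the generating set is assumed separately).
`m` is a true gap of `σ` if it is a gap and every bridge of `σ ∪ {m}` dominated by `m`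
is already a bridge of `σ`. -/
def IsTrueGap (ord : (V → ℕ) → ℕ) (σ : Finset (V → ℕ)) (m : V → ℕ) : Prop :=
  IsGap σ m ∧ ∀ m', IsBridge (insert m σ) m' → ord m' < ord m → IsBridge σ m'

/-- `σ` is type-1: it has a true gap (in `M`) dominating none of its bridges. -/
def Type1 (M : Finset (V → ℕ)) (ord : (V → ℕ) → ℕ) (σ : Finset (V → ℕ)) : Prop :=
  ∃ m ∈ M, IsTrueGap ord σ m ∧ ∀ b, IsBridge σ b → ¬ ord b < ord m

/-- `σ` is potentially-type-2: it has a bridge dominating none of its true gaps. -/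
def PotType2 (M : Finset (V → ℕ)) (ord : (V → ℕ) → ℕ) (σ : Finset (V → ℕ)) : Prop :=
  ∃ b, IsBridge σ b ∧ ∀ m ∈ M, IsTrueGap ord σ m → ¬ ord m < ord b

/-- `b` is the `≻`-smallest bridge of `σ`. -/
def IsSBridge (ord : (V → ℕ) → ℕ) (σ : Finset (V → ℕ)) (b : V → ℕ) : Prop :=
  IsBridge σ b ∧ ∀ b', IsBridge σ b' → ord b ≤ ord b'

/-- `σ` is type-2. -/
def Type2 (M : Finset (V → ℕ)) (ord : (V → ℕ) → ℕ) (σ : Finset (V → ℕ)) : Prop :=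
  PotType2 M ord σ ∧
    ∀ σ' : Finset (V → ℕ), σ' ⊆ M → σ' ≠ σ → PotType2 M ord σ' →
      ∀ b b', IsSBridge ord σ b → IsSBridge ord σ' b' →
        σ'.erase b' = σ.erase b → ord b < ord b'

/-- `M` (the minimal generating set of a monomial ideal) is bridge-friendly w.r.t. `ord`:
every potentially-type-2 subset is type-2. -/
def BridgeFriendlyWrt (M : Finset (V → ℕ)) (ord : (V → ℕ) → ℕ) : Prop :=
  ∀ σ ⊆ M, PotType2 M ord σ → Type2 M ord σ

/-- `M` is bridge-friendly: bridge-friendly w.r.t. some total order on `M`. -/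
def BridgeFriendly (M : Finset (V → ℕ)) : Prop :=
  ∃ ord : (V → ℕ) → ℕ, Set.InjOn ord M ∧ BridgeFriendlyWrt M ord

/-- `σ = {m_1 ≻ ⋯ ≻ m_k} ⊆ M` is Lyubeznik-critical w.r.t. `ord`: there is no `m ∈ M` with
`m_t ≻ m` and `m ∣ lcm(m_1, …, m_t)` for some `1 < t ≤ k`. -/
def LyubCritical (M : Finset (V → ℕ)) (ord : (V → ℕ) → ℕ) (σ : Finset (V → ℕ)) : Prop :=
  σ ⊆ M ∧ ¬ ∃ m ∈ M, ∃ t ∈ σ, (∃ u ∈ σ, ord t < ord u) ∧ ord m < ord t ∧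
      ∀ v, m v ≤ mlcm (σ.filter fun g => ord t ≤ ord g) v

/-- `M` is Lyubeznik: for some total order on `M`, no Lyubeznik-critical subset has a
bridge (equivalently, the associated Lyubeznik resolution is minimal). -/
def IsLyubeznik (M : Finset (V → ℕ)) : Prop :=
  ∃ ord : (V → ℕ) → ℕ, Set.InjOn ord M ∧
    ∀ σ : Finset (V → ℕ), LyubCritical M ord σ → ∀ b, ¬ IsBridge σ b

/-- The quadratic monomial `xy` attached to an edge `e = {x,y}`. -/
def edgeMon (e : Sym2 V) : V → ℕ := fun v => if v ∈ e then 1 else 0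

/-- `mingens(I(G))`: the edge monomials of `G`. -/
def edgeGens [Fintype V] (G : SimpleGraph V) : Finset (V → ℕ) :=
  (Finset.univ.filter fun e : Sym2 V => e ∈ G.edgeSet).image edgeMon

/-- `mingens(I(G)^n)`: the monomials that are products of `n` edges of `G`. -/
def edgePowGens [Fintype V] (G : SimpleGraph V) (n : ℕ) : Finset (V → ℕ) :=
  (Finset.univ.filter fun f : Fin n → Sym2 V => ∀ i, f i ∈ G.edgeSet).image
    fun f => ∑ i, edgeMon (f i)

/-- A graph is chordal if it contains no induced cycle of length at least 4. -/
def Chordal (G : SimpleGraph V) : Prop :=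
  ∀ n, 4 ≤ n → IsEmpty (SimpleGraph.cycleGraph n ↪g G)


/-- Vertex type of the graph `L(a,b,c)`: `Sum.inl 0` is `x`, `Sum.inl 1` is `y`,
and the remaining summands are the leaves `x_i`, the leaves `y_j`, and the
triangle tips `z_k`. -/
abbrev LV (a b c : ℕ) := Fin 2 ⊕ (Fin a ⊕ Fin b ⊕ Fin c)

/-- The graph `L(a,b,c)`: `c` triangles glued along the common edge `{x,y}`, with
`a` leaves attached to `x` and `b` leaves attached to `y`. -/
def LGraph (a b c : ℕ) : SimpleGraph (LV a b c) :=
  SimpleGraph.fromRel fun u v =>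
    (u = Sum.inl 0 ∧ v = Sum.inl 1) ∨
    (∃ i, u = Sum.inl 0 ∧ v = Sum.inr (Sum.inl i)) ∨
    (∃ j, u = Sum.inl 1 ∧ v = Sum.inr (Sum.inr (Sum.inl j))) ∨
    (∃ k, (u = Sum.inl 0 ∨ u = Sum.inl 1) ∧ v = Sum.inr (Sum.inr (Sum.inr k)))

/-- The graph `BF(T,w)`: attach `w(e)` new triangles along each edge `e` of `T`. -/
def BFGraph {VT : Type} (T : SimpleGraph VT) (w : T.edgeSet → ℕ) :
    SimpleGraph (VT ⊕ (Σ e : T.edgeSet, Fin (w e))) :=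
  SimpleGraph.fromRel fun u v =>
    (∃ a b, u = Sum.inl a ∧ v = Sum.inl b ∧ T.Adj a b) ∨
    (∃ (a : VT) (e : T.edgeSet) (i : Fin (w e)), u = Sum.inl a ∧ v = Sum.inr ⟨e, i⟩ ∧
      a ∈ (e : Sym2 VT))

/-- The kite graph: the diamond (`K₄` minus the edge `{2,3}`) together with a pendant
vertex `4` attached to the degree-two vertex `2`. -/
def kite : SimpleGraph (Fin 5) :=
  SimpleGraph.fromEdgeSet {s(0,1), s(0,2), s(0,3), s(1,2), s(1,3), s(2,4)}

/-- The gem graph: the path `0-1-2-3` together with a vertex `4` adjacent to all of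
`0,1,2,3`. -/
def gem : SimpleGraph (Fin 5) :=
  SimpleGraph.fromEdgeSet {s(0,1), s(1,2), s(2,3), s(0,4), s(1,4), s(2,4), s(3,4)}

/-- The tadpole graph: the triangle `0,1,2` with a path `0-3-4` of length 2 attached. -/
def tadpole : SimpleGraph (Fin 5) :=
  SimpleGraph.fromEdgeSet {s(0,1), s(1,2), s(0,2), s(0,3), s(3,4)}

/-- The butterfly graph: two triangles `0,1,2` and `0,3,4` sharing the vertex `0`. -/
def butterfly : SimpleGraph (Fin 5) :=
  SimpleGraph.fromEdgeSet {s(0,1), s(1,2), s(0,2), s(0,3), s(3,4), s(0,4)}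

/-- The net graph: the triangle `0,1,2` with pendant vertices `3,4,5` attached to
`0,1,2` respectively. -/
def net : SimpleGraph (Fin 6) :=
  SimpleGraph.fromEdgeSet {s(0,1), s(1,2), s(0,2), s(0,3), s(1,4), s(2,5)}

end ChauHaMaithani

/-!
Call `xy` a cover edge of `G` if every edge of `G` meets `{x, y}`. For connected `G` this means
exactly that `G ≅ L(a,b,c)`: the other vertices are the neighbours of `x` only, of `y` only and of
both, and no two of them are adjacent.

If `xy` is a cover edge, rank it first. A bridge of a set `σ` of edges forces two distinct edges
`s₁ ≺ s₂` of `σ`, both different from `xy`, which together contain `x` and `y`. Then `xy ≺ s₁`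
divides `lcm(s₁, s₂)`, so `σ` is not Lyubeznik-critical.

Conversely, let `xy` be the first edge of a Lyubeznik order and suppose some edge avoids `x` and
`y`. Connectivity gives a path `q - z - w` with `q ∈ {x, y}` and `z, w ∉ {x, y}`, and the first
edge inside `{q, z, w}` is `zw` or `qr` with `r ∈ {z, w}`. Then `{zw, qr, xy}` is
Lyubeznik-critical, and `qr` is a bridge of it.
-/

lemma Fintype.card_fiber_eq_ite {α β : Type*} [Fintype α] [DecidableEq β] {f : α → β} {a : α}
    {b : β} (h : ∀ x, f x = b → x = a) :
    Fintype.card {x // f x = b} = if f a = b then 1 else 0 := by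
  split_ifs with hb
  · exact Fintype.card_eq_one_iff.mpr ⟨⟨a, hb⟩, fun x => Subtype.ext (h x x.2)⟩
  · exact Fintype.card_eq_zero_iff.mpr ⟨fun x => hb (h x x.2 ▸ x.2)⟩

lemma Sym2.eq_of_forall_mem_or {α : Type*} {e : Sym2 α} {x y : α} (hd : ¬ e.IsDiag)
    (h : ∀ v ∈ e, v = x ∨ v = y) : e = s(x, y) := by
  induction e using Sym2.ind with
  | _ u v =>
    simp only [Sym2.mem_iff, forall_eq_or_imp, forall_eq, Sym2.mk_isDiag_iff] at h hd
    obtain ⟨rfl | rfl, rfl | rfl⟩ := h <;> simp_all [Sym2.eq_swap]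

lemma Sym2.exists_eq_of_forall_mem_or {α : Type*} {e : Sym2 α} {q z w : α} (hd : ¬ e.IsDiag)
    (h : ∀ v ∈ e, v = q ∨ v = z ∨ v = w) (hne : e ≠ s(z, w)) :
    ∃ r, (r = z ∨ r = w) ∧ e = s(q, r) := by
  by_cases hq : q ∈ e
  · refine ⟨Sym2.Mem.other hq, ?_, (Sym2.other_spec hq).symm⟩
    exact (h _ (Sym2.other_mem hq)).resolve_left (Sym2.other_ne hd hq)
  · exact absurd (Sym2.eq_of_forall_mem_or hd fun v hv =>
      (h v hv).resolve_left fun h => hq (h ▸ hv)) hne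

namespace SimpleGraph

variable {V W : Type*}

lemma Connected.exists_adj_adj_of_adj_compl {G : SimpleGraph V} (hconn : G.Connected)
    {S : Set V} {x u v : V} (hx : x ∈ S) (huv : G.Adj u v) (hu : u ∉ S) (hv : v ∉ S) :
    ∃ q ∈ S, ∃ z w, z ∉ S ∧ w ∉ S ∧ G.Adj q z ∧ G.Adj z w := by
  obtain ⟨W⟩ := hconn u x
  induction W generalizing v with
  | nil => exact absurd hx hu
  | @cons u a _ hua W ih =>
    by_cases ha : a ∈ S
    · exact ⟨a, ha, u, v, hu, hv, hua.symm, huv⟩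
    · exact ih hx hua.symm ha hu

def IsCoverEdge (G : SimpleGraph V) (x y : V) : Prop :=
  G.Adj x y ∧ ∀ e ∈ G.edgeSet, x ∈ e ∨ y ∈ e

section IsCoverEdge

variable {G : SimpleGraph V} {x y : V}

lemma IsCoverEdge.symm (h : G.IsCoverEdge x y) : G.IsCoverEdge y x :=
  ⟨h.1.symm, fun e he => (h.2 e he).symm⟩

lemma IsCoverEdge.of_iso {H : SimpleGraph W} (φ : G ≃g H) {x y : W} (h : H.IsCoverEdge x y) :
    G.IsCoverEdge (φ.symm x) (φ.symm y) := by
  refine ⟨φ.symm.map_adj_iff.mpr h.1, fun e he => ?_⟩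
  induction e using Sym2.ind with
  | _ u v => simpa [φ.symm_apply_eq, eq_comm] using h.2 s(φ u, φ v) (φ.map_adj_iff.mpr he)

lemma IsCoverEdge.mem_or_mem (h : G.IsCoverEdge x y) {e e' : Sym2 V} {r : V}
    (he : e ∈ G.edgeSet) (he' : e' ∈ G.edgeSet) (hne : e ≠ e') (hr : r ∈ e) (hr' : r ∈ e')
    (hry : r ≠ y) : x ∈ e ∨ x ∈ e' := by
  by_contra! hx
  have hy := (h.2 e he).resolve_left hx.1
  have hy' := (h.2 e' he').resolve_left hx.2
  exact hne (((Sym2.mem_and_mem_iff hry.symm).mp ⟨hy, hr⟩).trans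
    ((Sym2.mem_and_mem_iff hry.symm).mp ⟨hy', hr'⟩).symm)

lemma Connected.exists_adj_adj_of_not_isCoverEdge (hconn : G.Connected) (hxy : G.Adj x y)
    (h : ¬ G.IsCoverEdge x y) :
    ∃ q z w, (q = x ∨ q = y) ∧ (z ≠ x ∧ z ≠ y) ∧ (w ≠ x ∧ w ≠ y) ∧ G.Adj q z ∧ G.Adj z w := by
  obtain ⟨e, he, hxe, hye⟩ := by simpa [IsCoverEdge, hxy] using h
  induction e using Sym2.ind with
  | _ u v =>
    obtain ⟨q, hq, z, w, hz, hw, hqz, hzw⟩ :=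
      hconn.exists_adj_adj_of_adj_compl (S := {x, y}) (Set.mem_insert x _) he (by aesop)
        (by aesop)
    exact ⟨q, z, w, by simpa using hq, by simpa using hz, by simpa using hw, hqz, hzw⟩

lemma IsCoverEdge.adj_iff (h : G.IsCoverEdge x y) {u v : V} :
    G.Adj u v ↔ (u = x ∧ G.Adj x v) ∨ (u = y ∧ G.Adj y v) ∨
      (v = x ∧ G.Adj x u) ∨ (v = y ∧ G.Adj y u) := by
  refine ⟨fun huv => ?_, ?_⟩
  · rcases h.2 s(u, v) huv with hx | hy
    · rcases Sym2.mem_iff.mp hx with rfl | rfl <;> simp [huv, huv.symm]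
    · rcases Sym2.mem_iff.mp hy with rfl | rfl <;> simp [huv, huv.symm]
  · rintro (⟨rfl, h⟩ | ⟨rfl, h⟩ | ⟨rfl, h⟩ | ⟨rfl, h⟩) <;> first | exact h | exact h.symm

end IsCoverEdge

def coverLabel (G : SimpleGraph V) (x y v : V) : Bool × Bool × Bool × Bool :=
  (decide (v = x), decide (v = y), decide (G.Adj x v), decide (G.Adj y v))

def coverRel (l l' : Bool × Bool × Bool × Bool) : Bool :=
  l.1 && l'.2.2.1 || l.2.1 && l'.2.2.2 || l'.1 && l.2.2.1 || l'.2.1 && l.2.2.2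

section coverLabel

variable {G : SimpleGraph V} {x y : V}

lemma IsCoverEdge.adj_iff_coverRel (h : G.IsCoverEdge x y) {u v : V} :
    G.Adj u v ↔ coverRel (G.coverLabel x y u) (G.coverLabel x y v) := by
  rw [h.adj_iff]
  simp [coverRel, coverLabel, or_assoc]

-- Adjacency is a function of the labels, so a label-preserving bijection is an isomorphism.
lemma nonempty_iso_of_card_coverLabel [Fintype V] [Fintype W] {H : SimpleGraph W} {x' y' : W}
    (hG : G.IsCoverEdge x y) (hH : H.IsCoverEdge x' y')
    (hcard : ∀ l, Fintype.card {v // G.coverLabel x y v = l} =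
      Fintype.card {w // H.coverLabel x' y' w = l}) :
    Nonempty (G ≃g H) := by
  let φ := Equiv.ofFiberEquiv fun l => Fintype.equivOfCardEq (hcard l)
  refine ⟨⟨φ, fun {u v} => ?_⟩⟩
  rw [hG.adj_iff_coverRel, hH.adj_iff_coverRel]
  simp only [φ, Equiv.ofFiberEquiv_map]

lemma coverLabel_left (h : G.Adj x y) : G.coverLabel x y x = (true, false, false, true) := by
  simp [coverLabel, h.ne, h.symm]

lemma coverLabel_right (h : G.Adj x y) : G.coverLabel x y y = (false, true, true, false) := by
  simp [coverLabel, h.ne.symm, h]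

variable [Fintype V]

lemma card_coverLabel_of_fst {l : Bool × Bool × Bool × Bool} (hl : l.1 = true) :
    Fintype.card {v // G.coverLabel x y v = l} = if G.coverLabel x y x = l then 1 else 0 :=
  Fintype.card_fiber_eq_ite fun v hv => by simpa [← hv, coverLabel] using hl

lemma card_coverLabel_of_snd {l : Bool × Bool × Bool × Bool} (hl : l.2.1 = true) :
    Fintype.card {v // G.coverLabel x y v = l} = if G.coverLabel x y y = l then 1 else 0 :=
  Fintype.card_fiber_eq_ite fun v hv => by simpa [← hv, coverLabel] using hl

lemma IsCoverEdge.card_coverLabel_isolated (h : G.IsCoverEdge x y) (hconn : G.Connected) :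
    Fintype.card {v // G.coverLabel x y v = (false, false, false, false)} = 0 := by
  have : Nontrivial V := nontrivial_of_ne x y h.1.ne
  refine Fintype.card_eq_zero_iff.mpr ⟨fun ⟨v, hv⟩ => ?_⟩
  simp only [coverLabel, Prod.mk.injEq, decide_eq_false_iff_not] at hv
  obtain ⟨hvx, hvy, hxv, hyv⟩ := hv
  obtain ⟨w, hw⟩ := hconn.preconnected.exists_adj_of_nontrivial v
  rcases h.2 s(v, w) hw with hx | hy
  · rcases Sym2.mem_iff.mp hx with rfl | rfl
    exacts [hvx rfl, hxv hw.symm]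
  · rcases Sym2.mem_iff.mp hy with rfl | rfl
    exacts [hvy rfl, hyv hw.symm]

end coverLabel

end SimpleGraph

lemma exists_injective_forall_lt {α : Type*} [Countable α] (P : α) :
    ∃ ord : α → ℕ, Function.Injective ord ∧ ∀ m, m ≠ P → ord P < ord m := by
  obtain ⟨f, hf⟩ := Countable.exists_injective_nat α
  refine ⟨fun m => if m = P then 0 else f m + 1, fun m n h => ?_, fun m hm => by simp [hm]⟩
  dsimp only at h
  split_ifs at h with hm hn hn
  exacts [hm.trans hn.symm, hf (by omega)]

namespace ChauHaMaithani

section Monomials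

variable {V : Type*}

lemma mlcm_eq_sup (σ : Finset (V → ℕ)) : mlcm σ = σ.sup id :=
  funext fun v => (Finset.sup_apply σ id v).symm

lemma le_mlcm {σ : Finset (V → ℕ)} {m : V → ℕ} (h : m ∈ σ) : m ≤ mlcm σ :=
  mlcm_eq_sup σ ▸ Finset.le_sup (f := id) h

lemma mlcm_le_iff {σ : Finset (V → ℕ)} {n : V → ℕ} : mlcm σ ≤ n ↔ ∀ m ∈ σ, m ≤ n := by
  rw [mlcm_eq_sup, Finset.sup_le_iff]
  rfl

lemma pos_mlcm_iff {σ : Finset (V → ℕ)} {v : V} : 0 < mlcm σ v ↔ ∃ m ∈ σ, 0 < m v :=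
  Finset.lt_sup_iff

lemma isBridge_iff {σ : Finset (V → ℕ)} {m : V → ℕ} :
    IsBridge σ m ↔ m ∈ σ ∧ m ≤ mlcm (σ.erase m) := by
  refine and_congr_right fun hm => ?_
  have : mlcm σ = m ⊔ mlcm (σ.erase m) := by
    rw [mlcm_eq_sup, mlcm_eq_sup]
    conv_lhs => rw [← Finset.insert_erase hm]
    exact Finset.sup_insert
  rw [this, eq_comm, sup_eq_right]

lemma isBridge_of_le_sup {σ : Finset (V → ℕ)} {m a b : V → ℕ} (hm : m ∈ σ) (ha : a ∈ σ)
    (hb : b ∈ σ) (ham : a ≠ m) (hbm : b ≠ m) (h : m ≤ a ⊔ b) : IsBridge σ m :=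
  isBridge_iff.mpr ⟨hm, h.trans (sup_le (le_mlcm (Finset.mem_erase.mpr ⟨ham, ha⟩))
    (le_mlcm (Finset.mem_erase.mpr ⟨hbm, hb⟩)))⟩

lemma IsBridge.exists_pos {σ : Finset (V → ℕ)} {m : V → ℕ} (hb : IsBridge σ m) {v : V}
    (hv : 0 < m v) : ∃ g ∈ σ, g ≠ m ∧ 0 < g v := by
  obtain ⟨g, hg, hgv⟩ := pos_mlcm_iff.mp (hv.trans_le ((isBridge_iff.mp hb).2 v))
  exact ⟨g, Finset.mem_of_mem_erase hg, Finset.ne_of_mem_erase hg, hgv⟩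

variable {M σ : Finset (V → ℕ)} {ord : (V → ℕ) → ℕ}

lemma not_lyubCritical_of_le_sup {P s₁ s₂ : V → ℕ} (hP : P ∈ M) (h₁ : s₁ ∈ σ) (h₂ : s₂ ∈ σ)
    (h₁₂ : ord s₁ < ord s₂) (hP₁ : ord P < ord s₁) (hle : P ≤ s₁ ⊔ s₂) :
    ¬ LyubCritical M ord σ := by
  rintro ⟨-, hcrit⟩
  refine hcrit ⟨P, hP, s₁, h₁, ⟨s₂, h₂, h₁₂⟩, hP₁, hle.trans (sup_le ?_ ?_)⟩ <;>
    exact le_mlcm (Finset.mem_filter.mpr ⟨‹_›, by omega⟩)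

lemma lyubCritical_of_isLeast {A B P N : V → ℕ} (hσ : ∀ g, g ∈ σ ↔ g = A ∨ g = B ∨ g = P)
    (hinj : Set.InjOn ord M) (hA : A ∈ M) (hB : B ∈ M) (hP : P ∈ M) (hAB : A ≠ B)
    (hAN : A ≤ N) (hBN : B ≤ N) (hPN : ¬ P ≤ N) (hPmin : ∀ m ∈ M, ord P ≤ ord m)
    (hmin : ∀ m ∈ M, m ≤ N → ord A ≤ ord m ∨ ord B ≤ ord m) :
    LyubCritical M ord σ := by
  wlog hle : ord A ≤ ord B generalizing A B
  · exact this (fun g => (hσ g).trans or_left_comm) hB hA hAB.symm hBN hAN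
      (fun m hm hmN => (hmin m hm hmN).symm) (by omega)
  have hAmin : ∀ m ∈ M, m ≤ N → ord A ≤ ord m := fun m hm hmN => by
    rcases hmin m hm hmN with h | h <;> omega
  have hPA : ord P < ord A := (hPmin A hA).lt_of_ne fun h => hPN (hinj hP hA h ▸ hAN)
  have hAB' : ord A < ord B := hle.lt_of_ne fun h => hAB (hinj hA hB h)
  refine ⟨fun g hg => ?_, ?_⟩
  · rcases (hσ g).mp hg with rfl | rfl | rfl <;> assumption
  rintro ⟨m, hm, t, ht, ⟨u, hu, htu⟩, hmt, hdvd⟩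
  rcases (hσ t).mp ht with rfl | rfl | rfl
  · have hmN : m ≤ N := (show m ≤ _ from hdvd).trans <| mlcm_le_iff.mpr fun g hg => by
      obtain ⟨hg, hgt⟩ := Finset.mem_filter.mp hg
      rcases (hσ g).mp hg with rfl | rfl | rfl
      exacts [hAN, hBN, by omega]
    exact absurd (hAmin m hm hmN) (by omega)
  · rcases (hσ u).mp hu with rfl | rfl | rfl <;> omega
  · exact absurd (hPmin m hm) (by omega)

end Monomials

section EdgeMonomials

variable {V : Type*}

lemma edgeMon_pos_iff {e : Sym2 V} {v : V} : 0 < edgeMon e v ↔ v ∈ e := by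
  by_cases h : v ∈ e <;> simp [edgeMon, h]

lemma edgeMon_injective : Function.Injective (edgeMon (V := V)) := fun e e' h =>
  Sym2.ext fun v => by rw [← edgeMon_pos_iff, ← edgeMon_pos_iff, h]

lemma edgeMon_le_iff {e : Sym2 V} {f : V → ℕ} : edgeMon e ≤ f ↔ ∀ v ∈ e, 0 < f v := by
  refine Pi.le_def.trans (forall_congr' fun v => ?_)
  by_cases h : v ∈ e <;> simp [edgeMon, h, Nat.one_le_iff_ne_zero, Nat.pos_iff_ne_zero]

lemma edgeMon_le_sup_iff {e e₁ e₂ : Sym2 V} :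
    edgeMon e ≤ edgeMon e₁ ⊔ edgeMon e₂ ↔ ∀ v ∈ e, v ∈ e₁ ∨ v ∈ e₂ := by
  simp [edgeMon_le_iff, edgeMon_pos_iff]

variable [Fintype V] {G : SimpleGraph V}

lemma mem_edgeGens {m : V → ℕ} : m ∈ edgeGens G ↔ ∃ e ∈ G.edgeSet, edgeMon e = m := by
  simp [edgeGens]

lemma edgeMon_mem_edgeGens {e : Sym2 V} (he : e ∈ G.edgeSet) : edgeMon e ∈ edgeGens G :=
  mem_edgeGens.mpr ⟨e, he, rfl⟩

lemma IsBridge.exists_edge {σ : Finset (V → ℕ)} (hσ : σ ⊆ edgeGens G) {e : Sym2 V}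
    (hb : IsBridge σ (edgeMon e)) {v : V} (hv : v ∈ e) :
    ∃ e' ∈ G.edgeSet, edgeMon e' ∈ σ ∧ e' ≠ e ∧ v ∈ e' := by
  obtain ⟨g, hg, hgb, hgv⟩ := hb.exists_pos (edgeMon_pos_iff.mpr hv)
  obtain ⟨e', he', rfl⟩ := mem_edgeGens.mp (hσ hg)
  exact ⟨e', he', hg, fun h => hgb (h ▸ rfl), edgeMon_pos_iff.mp hgv⟩

end EdgeMonomials

section CoverEdge

variable {V : Type*} [Fintype V] {G : SimpleGraph V} {x y : V}

lemma exists_le_sup_of_isBridge (h : G.IsCoverEdge x y) {σ : Finset (V → ℕ)}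
    (hσ : σ ⊆ edgeGens G) {b : V → ℕ} (hb : IsBridge σ b) :
    ∃ s₁ ∈ σ, ∃ s₂ ∈ σ, s₁ ≠ s₂ ∧ s₁ ≠ edgeMon s(x, y) ∧ s₂ ≠ edgeMon s(x, y) ∧
      edgeMon s(x, y) ≤ s₁ ⊔ s₂ := by
  obtain ⟨e, he, rfl⟩ := mem_edgeGens.mp (hσ hb.1)
  by_cases hexy : e = s(x, y)
  · subst hexy
    obtain ⟨e₁, -, h₁σ, h₁, hx₁⟩ := hb.exists_edge hσ (Sym2.mem_mk_left x y)
    obtain ⟨e₂, -, h₂σ, h₂, hy₂⟩ := hb.exists_edge hσ (Sym2.mem_mk_right x y)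
    refine ⟨_, h₁σ, _, h₂σ, fun h₁₂ => h₁ ?_, fun h' => h₁ (edgeMon_injective h'),
      fun h' => h₂ (edgeMon_injective h'), edgeMon_le_sup_iff.mpr fun v hv => ?_⟩
    · exact (Sym2.mem_and_mem_iff h.1.ne).mp ⟨hx₁, edgeMon_injective h₁₂ ▸ hy₂⟩
    · rcases Sym2.mem_iff.mp hv with rfl | rfl
      exacts [Or.inl hx₁, Or.inr hy₂]
  · obtain ⟨r, hr, hrx, hry⟩ : ∃ r ∈ e, r ≠ x ∧ r ≠ y := by
      by_contra! h'
      exact hexy (Sym2.eq_of_forall_mem_or (G.not_isDiag_of_mem_edgeSet he)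
        fun v hv => or_iff_not_imp_left.mpr (h' v hv))
    obtain ⟨e₂, he₂, h₂σ, h₂, hr₂⟩ := hb.exists_edge hσ hr
    refine ⟨_, hb.1, _, h₂σ, fun h' => h₂ (edgeMon_injective h').symm,
      fun h' => hexy (edgeMon_injective h'), fun h' => ?_,
      edgeMon_le_sup_iff.mpr fun v hv => ?_⟩
    · rcases Sym2.mem_iff.mp (edgeMon_injective h' ▸ hr₂) with rfl | rfl
      exacts [hrx rfl, hry rfl]
    · rcases Sym2.mem_iff.mp hv with rfl | rfl
      exacts [h.mem_or_mem he he₂ (Ne.symm h₂) hr hr₂ hry,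
        h.symm.mem_or_mem he he₂ (Ne.symm h₂) hr hr₂ hrx]

lemma isLyubeznik_of_isCoverEdge (h : G.IsCoverEdge x y) : IsLyubeznik (edgeGens G) := by
  obtain ⟨ord, hinj, hP⟩ := exists_injective_forall_lt (edgeMon s(x, y))
  refine ⟨ord, hinj.injOn, fun σ hcrit b hb => ?_⟩
  obtain ⟨s₁, h₁, s₂, h₂, h₁₂, h₁P, h₂P, hle⟩ := exists_le_sup_of_isBridge h hcrit.1 hb
  have hPM : edgeMon s(x, y) ∈ edgeGens G := edgeMon_mem_edgeGens h.1
  rcases (hinj.ne h₁₂).lt_or_gt with hlt | hlt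
  · exact not_lyubCritical_of_le_sup hPM h₁ h₂ hlt (hP s₁ h₁P) hle hcrit
  · exact not_lyubCritical_of_le_sup hPM h₂ h₁ hlt (hP s₂ h₂P) (sup_comm s₁ s₂ ▸ hle) hcrit

variable {q z w : V}

lemma exists_least_le_sup {ord : (V → ℕ) → ℕ} (hqz : G.Adj q z) (hzw : G.Adj z w) :
    ∃ r, (r = z ∨ r = w) ∧ G.Adj q r ∧ ∀ m ∈ edgeGens G,
      m ≤ edgeMon s(q, z) ⊔ edgeMon s(z, w) →
        ord (edgeMon s(z, w)) ≤ ord m ∨ ord (edgeMon s(q, r)) ≤ ord m := by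
  set N := edgeMon s(q, z) ⊔ edgeMon s(z, w)
  obtain ⟨S, hS, hSmin⟩ := ((edgeGens G).filter (· ≤ N)).exists_min_image ord
    ⟨_, Finset.mem_filter.mpr ⟨edgeMon_mem_edgeGens hzw, le_sup_right⟩⟩
  obtain ⟨hSM, hSN⟩ := Finset.mem_filter.mp hS
  obtain ⟨e, he, rfl⟩ := mem_edgeGens.mp hSM
  have hmin m hm hmN := hSmin m (Finset.mem_filter.mpr ⟨hm, hmN⟩)
  by_cases hez : e = s(z, w)
  · exact ⟨z, Or.inl rfl, hqz, fun m hm hmN => Or.inl (hez ▸ hmin m hm hmN)⟩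
  · have hsub : ∀ v ∈ e, v = q ∨ v = z ∨ v = w := fun v hv => by
      simpa [Sym2.mem_iff, or_assoc] using edgeMon_le_sup_iff.mp hSN v hv
    obtain ⟨r, hr, rfl⟩ :=
      Sym2.exists_eq_of_forall_mem_or (G.not_isDiag_of_mem_edgeSet he) hsub hez
    exact ⟨r, hr, he, fun m hm hmN => Or.inr (hmin m hm hmN)⟩

lemma exists_lyubCritical_isBridge {ord : (V → ℕ) → ℕ} (hinj : Set.InjOn ord (edgeGens G))
    (hxy : G.Adj x y) (hPmin : ∀ m ∈ edgeGens G, ord (edgeMon s(x, y)) ≤ ord m)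
    (hq : q = x ∨ q = y) (hz : z ≠ x ∧ z ≠ y) (hw : w ≠ x ∧ w ≠ y) (hqz : G.Adj q z)
    (hzw : G.Adj z w) :
    ∃ σ b, LyubCritical (edgeGens G) ord σ ∧ IsBridge σ b := by
  obtain ⟨r, hr, hqr, hmin⟩ := exists_least_le_sup (ord := ord) hqz hzw
  set Z := edgeMon s(z, w)
  set Q := edgeMon s(q, r)
  set P := edgeMon s(x, y)
  have hZQ : Z ≠ Q := fun h => by
    have : q ∈ s(z, w) := edgeMon_injective h ▸ Sym2.mem_mk_left q r
    simp only [Sym2.mem_iff] at this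
    grind
  have hQP : Q ≠ P := fun h => by
    have : r ∈ s(x, y) := edgeMon_injective h ▸ Sym2.mem_mk_right q r
    simp only [Sym2.mem_iff] at this
    grind
  have hQN : Q ≤ edgeMon s(q, z) ⊔ Z := edgeMon_le_sup_iff.mpr fun v hv => by
    simp only [Sym2.mem_iff] at hv ⊢
    grind
  have hPN : ¬ P ≤ edgeMon s(q, z) ⊔ Z := fun h => by
    have hx := edgeMon_le_sup_iff.mp h x (Sym2.mem_mk_left x y)
    have hy := edgeMon_le_sup_iff.mp h y (Sym2.mem_mk_right x y)
    simp only [Sym2.mem_iff] at hx hy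
    exact hxy.ne (by grind)
  have hQle : Q ≤ Z ⊔ P := edgeMon_le_sup_iff.mpr fun v hv => by
    simp only [Sym2.mem_iff] at hv ⊢
    grind
  refine ⟨{Z, Q, P}, Q, lyubCritical_of_isLeast (by simp [Z, Q, P]) hinj (edgeMon_mem_edgeGens hzw)
    (edgeMon_mem_edgeGens hqr) (edgeMon_mem_edgeGens hxy) hZQ le_sup_right hQN hPN hPmin hmin,
    isBridge_of_le_sup (by simp) (by simp) (by simp) hZQ hQP.symm hQle⟩

lemma exists_isCoverEdge_of_isLyubeznik (hconn : G.Connected) (hedge : G.edgeSet.Nonempty)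
    (hL : IsLyubeznik (edgeGens G)) : ∃ x y, G.IsCoverEdge x y := by
  obtain ⟨ord, hinj, hnb⟩ := hL
  obtain ⟨e₀, he₀⟩ := hedge
  obtain ⟨P, hPM, hPmin⟩ := (edgeGens G).exists_min_image ord ⟨_, edgeMon_mem_edgeGens he₀⟩
  obtain ⟨e₀, he₀, rfl⟩ := mem_edgeGens.mp hPM
  induction e₀ using Sym2.ind with
  | _ x y =>
    refine ⟨x, y, by_contra fun hnot => ?_⟩
    obtain ⟨q, z, w, hq, hz, hw, hqz, hzw⟩ := hconn.exists_adj_adj_of_not_isCoverEdge he₀ hnot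
    obtain ⟨σ, b, hcrit, hb⟩ := exists_lyubCritical_isBridge hinj he₀ hPmin hq hz hw hqz hzw
    exact hnb σ hcrit b hb

end CoverEdge

lemma LGraph_isCoverEdge (a b c : ℕ) : (LGraph a b c).IsCoverEdge (Sum.inl 0) (Sum.inl 1) := by
  refine ⟨by simp [LGraph], fun e he => ?_⟩
  induction e using Sym2.ind with
  | _ u v =>
    simp only [SimpleGraph.mem_edgeSet, LGraph, SimpleGraph.fromRel_adj] at he
    simp only [Sym2.mem_iff]
    aesop

lemma card_coverLabel_LGraph (a b c : ℕ) (p q : Bool) :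
    Fintype.card {t // (LGraph a b c).coverLabel (Sum.inl 0) (Sum.inl 1) t = (false, false, p, q)} =
      (if p ∧ ¬ q then a else 0) + (if ¬ p ∧ q then b else 0) + (if p ∧ q then c else 0) := by
  rw [Fintype.card_subtype, Finset.card_filter]
  simp only [Fintype.sum_sum_type, Fin.sum_univ_two]
  simp [SimpleGraph.coverLabel, LGraph, add_assoc]

open SimpleGraph in
lemma exists_iso_LGraph_of_isCoverEdge {V : Type*} [Fintype V] {G : SimpleGraph V} {x y : V}
    (h : G.IsCoverEdge x y) (hconn : G.Connected) :
    ∃ a b c : ℕ, Nonempty (G ≃g LGraph a b c) := by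
  let n (p q : Bool) := Fintype.card {v // G.coverLabel x y v = (false, false, p, q)}
  refine ⟨n true false, n false true, n true true,
    nonempty_iso_of_card_coverLabel h (LGraph_isCoverEdge _ _ _) fun l => ?_⟩
  have hL := (LGraph_isCoverEdge (n true false) (n false true) (n true true)).1
  rcases l with ⟨_ | _, _ | _, p, q⟩
  · rw [card_coverLabel_LGraph]
    cases p <;> cases q <;> simp [n, h.card_coverLabel_isolated hconn]
  · rw [card_coverLabel_of_snd rfl, card_coverLabel_of_snd rfl, coverLabel_right h.1,
      coverLabel_right hL]
  all_goals rw [card_coverLabel_of_fst rfl, card_coverLabel_of_fst rfl, coverLabel_left h.1,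
    coverLabel_left hL]

/-- **Theorem 3.7.** For a finite connected simple graph `G` with at least one edge,
the edge ideal `I(G)` is Lyubeznik iff `G ≅ L(a,b,c)` for some `a, b, c ∈ ℕ`. -/
theorem edgeIdeal_isLyubeznik_iff {V : Type} [Fintype V] (G : SimpleGraph V)
    (hconn : G.Connected) (hedge : G.edgeSet.Nonempty) :
    IsLyubeznik (edgeGens G) ↔ ∃ a b c : ℕ, Nonempty (G ≃g LGraph a b c) := by
  constructor
  · intro h
    obtain ⟨x, y, hxy⟩ := exists_isCoverEdge_of_isLyubeznik hconn hedge h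
    exact exists_iso_LGraph_of_isCoverEdge hxy hconn
  · rintro ⟨a, b, c, ⟨φ⟩⟩
    exact isLyubeznik_of_isCoverEdge ((LGraph_isCoverEdge a b c).of_iso φ)

end ChauHaMaithani
end
end

section
/- For every integer n ≥ 3, the edge ideal I(C_n) of the n-cycle is bridge-friendly if and only if n ∈ {3, 5, 6}. -/
/-!
Bridge-friendliness with respect to `≻` says exactly that `σ ↦ σ ∖ {sbridge σ}` is injective on
potentially-type-2 sets: for two distinct such sets with the same image, the type-2 conditions
of each give `sbridge σ ≺ sbridge σ'` and `sbridge σ' ≺ sbridge σ`.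

On `C_n` write `e_i = x_i x_{i+1}`. Then `e_i` is a bridge of a set `S` of edges iff
`e_{i-1}, e_i, e_{i+1} ∈ S`, and a gap iff `e_{i-1}, e_{i+1} ∈ S ∌ e_i`, so the whole condition
becomes a finite statement about subsets of `ℤ/n`; for `n = 3, 5, 6` it holds for the order
`e_0 ≺ ⋯ ≺ e_{n-1}` by evaluation. Conversely, rotate the cycle so that the smallest edge is
`e_0` (`n = 4`) resp. `e_3` (`n ≥ 7`). Then `{e_0, e_1, e_2}, {e_0, e_2, e_3}`
resp. `{e_1, e_2, e_3, e_5}, {e_1, e_3, e_4, e_5}` each have a single bridge, removing it gives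
the same set, and their only gaps are not true gaps because filling them creates a bridge at
the smallest edge.
-/

open scoped Classical

noncomputable section

namespace ChauHaMaithani

variable {V : Type*}

lemma mlcm_insert_eq_iff {σ : Finset (V → ℕ)} {m : V → ℕ} :
    mlcm (insert m σ) = mlcm σ ↔ m ≤ mlcm σ := by
  simp only [funext_iff, Pi.le_def, mlcm, Finset.sup_insert, sup_eq_right]

lemma isGap_iff {σ : Finset (V → ℕ)} {m : V → ℕ} : IsGap σ m ↔ m ∉ σ ∧ m ≤ mlcm σ := by
  rw [IsGap, mlcm_insert_eq_iff]

lemma bridgeFriendlyWrt_iff {M : Finset (V → ℕ)} {ord : (V → ℕ) → ℕ} :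
    BridgeFriendlyWrt M ord ↔
      ∀ σ ⊆ M, ∀ b, IsSBridge ord σ b → ∀ τ ⊆ M, ∀ b', IsSBridge ord τ b' →
        σ.erase b = τ.erase b' → PotType2 M ord σ → PotType2 M ord τ → σ = τ := by
  constructor
  · intro h σ hσ b hb τ hτ b' hb' herase hσ2 hτ2
    by_contra hne
    have := (h σ hσ hσ2).2 τ hτ (Ne.symm hne) hτ2 b b' hb hb' herase.symm
    have := (h τ hτ hτ2).2 σ hσ hne hσ2 b' b hb' hb herase
    omega
  · intro h σ hσ hσ2
    exact ⟨hσ2, fun τ hτ hne hτ2 b b' hb hb' herase =>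
      absurd (h σ hσ b hb τ hτ b' hb' herase.symm hσ2 hτ2).symm hne⟩

section Reindex

variable {ι : Type*} {e : ι ↪ V → ℕ} {S : Finset ι} {ord : (V → ℕ) → ℕ}

lemma isBridge_map_iff [DecidableEq ι] {i : ι} :
    IsBridge (S.map e) (e i) ↔ i ∈ S ∧ e i ≤ mlcm ((S.erase i).map e) := by
  rw [isBridge_iff, Finset.mem_map', Finset.map_erase]

lemma isGap_map_iff {i : ι} : IsGap (S.map e) (e i) ↔ i ∉ S ∧ e i ≤ mlcm (S.map e) := by
  rw [isGap_iff, Finset.mem_map']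

lemma isTrueGap_map_iff [DecidableEq ι] {g : ι} :
    IsTrueGap ord (S.map e) (e g) ↔ IsGap (S.map e) (e g) ∧
      ∀ j, IsBridge ((insert g S).map e) (e j) → ord (e j) < ord (e g) →
        IsBridge (S.map e) (e j) := by
  rw [IsTrueGap, ← Finset.map_insert]
  refine and_congr_right fun _ => ⟨fun h j => h (e j), fun h m hm => ?_⟩
  obtain ⟨j, -, rfl⟩ := Finset.mem_map.1 hm.1
  exact h j hm

lemma potType2_map_iff [Fintype ι] :
    PotType2 (Finset.univ.map e) ord (S.map e) ↔
      ∃ b, IsBridge (S.map e) (e b) ∧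
        ∀ g, IsTrueGap ord (S.map e) (e g) → ¬ ord (e g) < ord (e b) := by
  constructor
  · rintro ⟨m, hm, h⟩
    obtain ⟨b, -, rfl⟩ := Finset.mem_map.1 hm.1
    exact ⟨b, hm, fun g => h (e g) (Finset.mem_map_of_mem e (Finset.mem_univ g))⟩
  · rintro ⟨b, hb, h⟩
    refine ⟨e b, hb, fun m hm => ?_⟩
    obtain ⟨g, -, rfl⟩ := Finset.mem_map.1 hm
    exact h g

lemma isSBridge_map_iff {b : ι} :
    IsSBridge ord (S.map e) (e b) ↔
      IsBridge (S.map e) (e b) ∧ ∀ b', IsBridge (S.map e) (e b') → ord (e b) ≤ ord (e b') := by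
  refine and_congr_right fun _ => ⟨fun h b' => h (e b'), fun h m hm => ?_⟩
  obtain ⟨b', -, rfl⟩ := Finset.mem_map.1 hm.1
  exact h b' hm

lemma bridgeFriendlyWrt_map_iff [DecidableEq ι] [Fintype ι] :
    BridgeFriendlyWrt (Finset.univ.map e) ord ↔
      ∀ (S : Finset ι) (b : ι), IsSBridge ord (S.map e) (e b) →
        ∀ (T : Finset ι) (b' : ι), IsSBridge ord (T.map e) (e b') → S.erase b = T.erase b' →
        PotType2 (Finset.univ.map e) ord (S.map e) →
        PotType2 (Finset.univ.map e) ord (T.map e) → S = T := by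
  rw [bridgeFriendlyWrt_iff]
  constructor
  · intro h S b hb T b' hb' herase hS hT
    refine (Finset.map_inj (f := e)).1 (h _ ?_ _ hb _ ?_ _ hb' ?_ hS hT)
    · exact Finset.map_subset_map.2 (Finset.subset_univ S)
    · exact Finset.map_subset_map.2 (Finset.subset_univ T)
    · rw [← Finset.map_erase, ← Finset.map_erase, herase]
  · intro h σ hσ m hm τ hτ m' hm' herase hσ2 hτ2
    obtain ⟨S, -, rfl⟩ := Finset.subset_map_iff.1 hσ
    obtain ⟨T, -, rfl⟩ := Finset.subset_map_iff.1 hτ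
    obtain ⟨b, -, rfl⟩ := Finset.mem_map.1 hm.1.1
    obtain ⟨b', -, rfl⟩ := Finset.mem_map.1 hm'.1.1
    rw [← Finset.map_erase, ← Finset.map_erase, Finset.map_inj] at herase
    rw [h S b hm T b' hm' herase hσ2 hτ2]

end Reindex

section AddGroup

variable {G : Type*} [AddGroup G] {S : Finset G} {j : G}

lemma mem_map_addRightEmbedding {x : G} : x ∈ S.map (addRightEmbedding j) ↔ x - j ∈ S := by
  simp only [Finset.mem_map, addRightEmbedding_apply, ← eq_sub_iff_add_eq, exists_eq_right]

lemma exists_eq_add_right (k : G) : ∃ i, k = i + j := ⟨k - j, (sub_add_cancel k j).symm⟩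

end AddGroup

section Cycle

open Fin.CommRing

variable {n : ℕ} [NeZero n]

def cycleEdge (i : Fin n) : Fin n → ℕ := edgeMon s(i, i + 1)

lemma cycleEdge_injective (hn : 3 ≤ n) : Function.Injective (cycleEdge (n := n)) := by
  intro i j h
  rcases Sym2.eq_iff.mp (edgeMon_injective h) with ⟨h, -⟩ | ⟨rfl, h⟩
  · exact h
  · have : (2 : Fin n) = 0 := by linear_combination h
    simp (disch := omega) [Fin.ext_iff, Nat.mod_eq_of_lt] at this

def cycleEdgeEmb (hn : 3 ≤ n) : Fin n ↪ (Fin n → ℕ) := ⟨cycleEdge, cycleEdge_injective hn⟩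

lemma cycleEdgeEmb_apply (hn : 3 ≤ n) (i : Fin n) : cycleEdgeEmb hn i = cycleEdge i := rfl

lemma cycleEdge_apply (i v : Fin n) : cycleEdge i v = if v = i ∨ v = i + 1 then 1 else 0 := by
  simp [cycleEdge, edgeMon]

lemma cycleEdge_le_iff {i : Fin n} {f : Fin n → ℕ} :
    cycleEdge i ≤ f ↔ 1 ≤ f i ∧ 1 ≤ f (i + 1) := by
  refine ⟨fun h => ⟨?_, ?_⟩, fun ⟨hi, hi'⟩ v => ?_⟩
  · simpa [cycleEdge_apply] using h i
  · simpa [cycleEdge_apply] using h (i + 1)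
  · rw [cycleEdge_apply]
    split_ifs with hv
    · rcases hv with rfl | rfl <;> assumption
    · exact Nat.zero_le _

lemma cycleEdge_le_mlcm_map_iff (hn : 3 ≤ n) {S : Finset (Fin n)} {i : Fin n} :
    cycleEdge i ≤ mlcm (S.map (cycleEdgeEmb hn)) ↔ (i - 1 ∈ S ∨ i ∈ S) ∧ (i ∈ S ∨ i + 1 ∈ S) := by
  have covered : ∀ v, 1 ≤ mlcm (S.map (cycleEdgeEmb hn)) v ↔ v - 1 ∈ S ∨ v ∈ S := fun v => by
    rw [mlcm, Finset.sup_map, Finset.le_sup_iff Nat.one_pos]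
    simp only [Function.comp_apply, cycleEdgeEmb_apply, cycleEdge_apply]
    constructor
    · rintro ⟨j, hj, h⟩
      split_ifs at h with hv
      · rcases hv with rfl | rfl <;> simp [hj]
      · omega
    · rintro (h | h)
      · exact ⟨_, h, by simp⟩
      · exact ⟨_, h, by simp⟩
  rw [cycleEdge_le_iff, covered, covered, add_sub_cancel_right]

lemma cycleGraph_adj_iff (hn : 2 ≤ n) {u v : Fin n} :
    (SimpleGraph.cycleGraph n).Adj u v ↔ u = v + 1 ∨ v = u + 1 := by
  have val_eq_one : ∀ x : Fin n, x.val = 1 ↔ x = 1 := fun x => by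
    simp (disch := omega) [Fin.ext_iff, Nat.mod_eq_of_lt]
  rw [SimpleGraph.cycleGraph_adj', val_eq_one, val_eq_one, sub_eq_iff_eq_add,
    sub_eq_iff_eq_add, add_comm v, add_comm u]

lemma edgeGens_cycleGraph (hn : 3 ≤ n) :
    edgeGens (SimpleGraph.cycleGraph n) = Finset.univ.map (cycleEdgeEmb hn) := by
  ext m
  simp only [edgeGens, Finset.mem_image, Finset.mem_filter, Finset.mem_univ, true_and,
    Finset.mem_map, cycleEdgeEmb_apply]
  constructor
  · rintro ⟨e, he, rfl⟩
    induction e using Sym2.inductionOn with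
    | hf u v =>
      rw [SimpleGraph.mem_edgeSet, cycleGraph_adj_iff (by omega)] at he
      rcases he with rfl | rfl
      · exact ⟨v, congrArg edgeMon Sym2.eq_swap⟩
      · exact ⟨u, rfl⟩
  · rintro ⟨i, rfl⟩
    exact ⟨s(i, i + 1), (cycleGraph_adj_iff (by omega)).2 (Or.inr rfl), rfl⟩

/- The bridge-friendliness notions for sets `{e_i | i ∈ S}` of edges of `C_n`, written in terms
of the index set `S` and the weights `w i = ord e_i`. -/

def IsCycleBridge (S : Finset (Fin n)) (i : Fin n) : Prop :=
  i - 1 ∈ S ∧ i ∈ S ∧ i + 1 ∈ S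

def IsCycleGap (S : Finset (Fin n)) (i : Fin n) : Prop :=
  i - 1 ∈ S ∧ i ∉ S ∧ i + 1 ∈ S

def IsCycleTrueGap (w : Fin n → ℕ) (S : Finset (Fin n)) (g : Fin n) : Prop :=
  IsCycleGap S g ∧ ∀ j, IsCycleBridge (insert g S) j → w j < w g → IsCycleBridge S j

def CyclePotType2 (w : Fin n → ℕ) (S : Finset (Fin n)) : Prop :=
  ∃ b, IsCycleBridge S b ∧ ∀ g, IsCycleTrueGap w S g → ¬ w g < w b

def IsCycleSBridge (w : Fin n → ℕ) (S : Finset (Fin n)) (b : Fin n) : Prop :=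
  IsCycleBridge S b ∧ ∀ b', IsCycleBridge S b' → w b ≤ w b'

def CycleBridgeFriendlyWrt (w : Fin n → ℕ) : Prop :=
  ∀ (S : Finset (Fin n)) (b : Fin n), IsCycleSBridge w S b → ∀ (T : Finset (Fin n)) (b' : Fin n),
    IsCycleSBridge w T b' → S.erase b = T.erase b' → CyclePotType2 w S → CyclePotType2 w T → S = T

instance (S : Finset (Fin n)) (i : Fin n) : Decidable (IsCycleBridge S i) := by
  unfold IsCycleBridge; infer_instance

instance (S : Finset (Fin n)) (i : Fin n) : Decidable (IsCycleGap S i) := by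
  unfold IsCycleGap; infer_instance

instance (w : Fin n → ℕ) (S : Finset (Fin n)) (g : Fin n) : Decidable (IsCycleTrueGap w S g) := by
  unfold IsCycleTrueGap; infer_instance

instance (w : Fin n → ℕ) (S : Finset (Fin n)) : Decidable (CyclePotType2 w S) := by
  unfold CyclePotType2; infer_instance

instance (w : Fin n → ℕ) (S : Finset (Fin n)) (b : Fin n) : Decidable (IsCycleSBridge w S b) := by
  unfold IsCycleSBridge; infer_instance

instance (w : Fin n → ℕ) : Decidable (CycleBridgeFriendlyWrt w) := by
  unfold CycleBridgeFriendlyWrt; infer_instance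

lemma isBridge_map_cycleEdgeEmb (hn : 3 ≤ n) {S : Finset (Fin n)} {i : Fin n} :
    IsBridge (S.map (cycleEdgeEmb hn)) (cycleEdgeEmb hn i) ↔ IsCycleBridge S i := by
  have h1 : i - 1 ≠ i := by simp (disch := omega) [Fin.ext_iff, Nat.mod_eq_of_lt]
  have h2 : i + 1 ≠ i := by simp (disch := omega) [Fin.ext_iff, Nat.mod_eq_of_lt]
  rw [isBridge_map_iff, cycleEdgeEmb_apply, cycleEdge_le_mlcm_map_iff, IsCycleBridge]
  simp only [Finset.mem_erase, ne_eq, h1, h2, not_true_eq_false, not_false_eq_true, true_and,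
    false_and, false_or, or_false]
  tauto

lemma isGap_map_cycleEdgeEmb (hn : 3 ≤ n) {S : Finset (Fin n)} {i : Fin n} :
    IsGap (S.map (cycleEdgeEmb hn)) (cycleEdgeEmb hn i) ↔ IsCycleGap S i := by
  rw [isGap_map_iff, cycleEdgeEmb_apply, cycleEdge_le_mlcm_map_iff, IsCycleGap]
  tauto

lemma bridgeFriendlyWrt_cycle_iff (hn : 3 ≤ n) {ord : (Fin n → ℕ) → ℕ} :
    BridgeFriendlyWrt (Finset.univ.map (cycleEdgeEmb hn)) ord ↔
      CycleBridgeFriendlyWrt (fun i => ord (cycleEdge i)) := by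
  simp only [bridgeFriendlyWrt_map_iff, isSBridge_map_iff, potType2_map_iff, isTrueGap_map_iff,
    isGap_map_cycleEdgeEmb, isBridge_map_cycleEdgeEmb, CycleBridgeFriendlyWrt, IsCycleSBridge,
    CyclePotType2, IsCycleTrueGap]
  rfl

lemma bridgeFriendly_cycleGraph_iff (hn : 3 ≤ n) :
    BridgeFriendly (edgeGens (SimpleGraph.cycleGraph n)) ↔
      ∃ w : Fin n → ℕ, Function.Injective w ∧ CycleBridgeFriendlyWrt w := by
  have he := cycleEdge_injective hn
  rw [BridgeFriendly, edgeGens_cycleGraph hn]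
  constructor
  · rintro ⟨ord, hord, h⟩
    refine ⟨_, fun i j hij => he (hord ?_ ?_ hij), (bridgeFriendlyWrt_cycle_iff hn).1 h⟩ <;>
      simp [cycleEdgeEmb_apply]
  · rintro ⟨w, hw, h⟩
    have hext : (fun i => Function.extend cycleEdge w 0 (cycleEdge i)) = w :=
      funext fun i => he.extend_apply w 0 i
    refine ⟨Function.extend cycleEdge w 0, ?_, (bridgeFriendlyWrt_cycle_iff hn).2 (by rwa [hext])⟩
    rintro _ hm _ hm' heq
    simp only [Finset.coe_map, Set.mem_image, cycleEdgeEmb_apply] at hm hm'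
    obtain ⟨i, -, rfl⟩ := hm
    obtain ⟨j, -, rfl⟩ := hm'
    rw [he.extend_apply, he.extend_apply] at heq
    rw [hw heq]

set_option maxRecDepth 4000 in
lemma cycleBridgeFriendlyWrt_val :
    CycleBridgeFriendlyWrt (Fin.val : Fin 3 → ℕ) ∧ CycleBridgeFriendlyWrt (Fin.val : Fin 5 → ℕ) ∧
      CycleBridgeFriendlyWrt (Fin.val : Fin 6 → ℕ) :=
  ⟨by decide, by decide, by decide⟩

section Rotation

variable {S : Finset (Fin n)} {w : Fin n → ℕ} {j : Fin n}

lemma isCycleBridge_map_addRight {i : Fin n} :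
    IsCycleBridge (S.map (addRightEmbedding j)) (i + j) ↔ IsCycleBridge S i := by
  simp only [IsCycleBridge, mem_map_addRightEmbedding]
  ring_nf

lemma isCycleGap_map_addRight {i : Fin n} :
    IsCycleGap (S.map (addRightEmbedding j)) (i + j) ↔ IsCycleGap S i := by
  simp only [IsCycleGap, mem_map_addRightEmbedding]
  ring_nf

lemma isCycleTrueGap_map_addRight {g : Fin n} :
    IsCycleTrueGap w (S.map (addRightEmbedding j)) (g + j) ↔
      IsCycleTrueGap (fun i => w (i + j)) S g := by
  have hins : insert (g + j) (S.map (addRightEmbedding j)) =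
      (insert g S).map (addRightEmbedding j) := (Finset.map_insert _ _ _).symm
  rw [IsCycleTrueGap, IsCycleTrueGap, isCycleGap_map_addRight, hins]
  refine and_congr_right fun _ => ⟨fun h i hi hlt => ?_, fun h k hk hlt => ?_⟩
  · exact isCycleBridge_map_addRight.1 (h _ (isCycleBridge_map_addRight.2 hi) hlt)
  · obtain ⟨i, rfl⟩ := exists_eq_add_right (j := j) k
    exact isCycleBridge_map_addRight.2 (h i (isCycleBridge_map_addRight.1 hk) hlt)

lemma cyclePotType2_map_addRight :
    CyclePotType2 w (S.map (addRightEmbedding j)) ↔ CyclePotType2 (fun i => w (i + j)) S := by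
  constructor
  · rintro ⟨b, hb, h⟩
    obtain ⟨b, rfl⟩ := exists_eq_add_right (j := j) b
    exact ⟨b, isCycleBridge_map_addRight.1 hb,
      fun g hg => h _ (isCycleTrueGap_map_addRight.2 hg)⟩
  · rintro ⟨b, hb, h⟩
    refine ⟨b + j, isCycleBridge_map_addRight.2 hb, fun g hg => ?_⟩
    obtain ⟨g, rfl⟩ := exists_eq_add_right (j := j) g
    exact h g (isCycleTrueGap_map_addRight.1 hg)

lemma isCycleSBridge_map_addRight {b : Fin n} :
    IsCycleSBridge w (S.map (addRightEmbedding j)) (b + j) ↔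
      IsCycleSBridge (fun i => w (i + j)) S b := by
  rw [IsCycleSBridge, IsCycleSBridge, isCycleBridge_map_addRight]
  refine and_congr_right fun _ => ⟨fun h i hi => h _ (isCycleBridge_map_addRight.2 hi),
    fun h k hk => ?_⟩
  obtain ⟨i, rfl⟩ := exists_eq_add_right (j := j) k
  exact h i (isCycleBridge_map_addRight.1 hk)

lemma CycleBridgeFriendlyWrt.comp_add_right (h : CycleBridgeFriendlyWrt w) (j : Fin n) :
    CycleBridgeFriendlyWrt (fun i => w (i + j)) := by
  intro S b hb T b' hb' herase hS hT
  refine Finset.map_injective (addRightEmbedding j) (h _ (b + j)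
    (isCycleSBridge_map_addRight.2 hb) _ (b' + j) (isCycleSBridge_map_addRight.2 hb') ?_
    (cyclePotType2_map_addRight.2 hS) (cyclePotType2_map_addRight.2 hT))
  exact (Finset.map_erase _ S b).symm.trans ((congrArg _ herase).trans (Finset.map_erase _ T b'))

end Rotation

lemma exists_forall_lt_add_right {w : Fin n → ℕ} (hw : Function.Injective w)
    (k : Fin n) : ∃ j, ∀ i ≠ k, w (k + j) < w (i + j) := by
  obtain ⟨m, -, hm⟩ := Finset.univ.exists_min_image w Finset.univ_nonempty
  refine ⟨m - k, fun i hi => lt_of_le_of_ne ?_ fun h => hi (add_right_cancel (hw h)).symm⟩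
  rw [add_sub_cancel]
  exact hm _ (Finset.mem_univ _)

lemma not_cycleBridgeFriendlyWrt_of_exchange {w : Fin n → ℕ} {S T : Finset (Fin n)}
    {b b' c : Fin n} (hS : ∀ x, IsCycleBridge S x ↔ x = b) (hT : ∀ x, IsCycleBridge T x ↔ x = b')
    (hgS : ∀ x, IsCycleGap S x → x = b') (hgT : ∀ x, IsCycleGap T x → x = b)
    (hcS : IsCycleBridge (insert b' S) c) (hcT : IsCycleBridge (insert b T) c)
    (hcb : w c < w b) (hcb' : w c < w b') (herase : S.erase b = T.erase b') (hne : S ≠ T) :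
    ¬ CycleBridgeFriendlyWrt w := by
  have no_true_gap : ∀ {U : Finset (Fin n)} {a a' : Fin n}, (∀ x, IsCycleBridge U x ↔ x = a) →
      (∀ x, IsCycleGap U x → x = a') → IsCycleBridge (insert a' U) c → w c < w a → w c < w a' →
      ∀ g, ¬ IsCycleTrueGap w U g := by
    rintro U a a' hU hgU hc hca hca' g ⟨hg, hnew⟩
    obtain rfl := hgU g hg
    exact hca.ne (congrArg w ((hU c).1 (hnew c hc hca')))
  have potType2 : ∀ {U : Finset (Fin n)} {a : Fin n}, (∀ x, IsCycleBridge U x ↔ x = a) →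
      (∀ g, ¬ IsCycleTrueGap w U g) → IsCycleSBridge w U a ∧ CyclePotType2 w U :=
    fun hU hgU => ⟨⟨(hU _).2 rfl, fun x hx => (hU x).1 hx ▸ le_rfl⟩,
      ⟨_, (hU _).2 rfl, fun g hg => (hgU g hg).elim⟩⟩
  obtain ⟨hbS, hpotS⟩ := potType2 hS (no_true_gap hS hgS hcS hcb hcb')
  obtain ⟨hbT, hpotT⟩ := potType2 hT (no_true_gap hT hgT hcT hcb' hcb)
  exact fun h => hne (h S b hbS T b' hbT herase hpotS hpotT)

lemma not_cycleBridgeFriendlyWrt_four {w : Fin 4 → ℕ} (hmin : ∀ i ≠ 0, w 0 < w i) :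
    ¬ CycleBridgeFriendlyWrt w :=
  not_cycleBridgeFriendlyWrt_of_exchange (S := {0, 1, 2}) (T := {0, 2, 3}) (b := 1) (b' := 3)
    (c := 0) (by decide) (by decide) (by decide) (by decide) (by decide) (by decide)
    (hmin 1 (by decide)) (hmin 3 (by decide)) (by decide) (by decide)

lemma not_cycleBridgeFriendlyWrt_of_seven_le (hn : 7 ≤ n) {w : Fin n → ℕ}
    (hmin : ∀ i ≠ 3, w 3 < w i) : ¬ CycleBridgeFriendlyWrt w := by
  obtain ⟨bridges_S, bridges_T, gaps_S, gaps_T, new_S, new_T, herase, two_notMem, h2, h4⟩ :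
      (∀ x, IsCycleBridge ({2, 1, 3, 5} : Finset (Fin n)) x ↔ x = 2) ∧
      (∀ x, IsCycleBridge ({4, 1, 3, 5} : Finset (Fin n)) x ↔ x = 4) ∧
      (∀ x, IsCycleGap ({2, 1, 3, 5} : Finset (Fin n)) x → x = 4) ∧
      (∀ x, IsCycleGap ({4, 1, 3, 5} : Finset (Fin n)) x → x = 2) ∧
      IsCycleBridge (insert 4 {2, 1, 3, 5} : Finset (Fin n)) 3 ∧
      IsCycleBridge (insert 2 {4, 1, 3, 5} : Finset (Fin n)) 3 ∧
      ({2, 1, 3, 5} : Finset (Fin n)).erase 2 = ({4, 1, 3, 5} : Finset (Fin n)).erase 4 ∧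
      (2 : Fin n) ∉ ({4, 1, 3, 5} : Finset (Fin n)) ∧ (2 : Fin n) ≠ 3 ∧ (4 : Fin n) ≠ 3 := by
    refine ⟨fun x => ?_, fun x => ?_, fun x => ?_, fun x => ?_, ?_, ?_, Finset.ext fun x => ?_,
      ?_, ?_, ?_⟩
    -- Rewriting `x ± 1 = a` as `x = a ∓ 1` keeps every numeral in `0, …, 6`, all distinct in
    -- `Fin n`; the numeral `7` would wrap around when `n = 7`.
    all_goals
      simp only [IsCycleBridge, IsCycleGap, ne_eq, Finset.mem_erase, Finset.mem_insert,
        Finset.mem_singleton, sub_eq_iff_eq_add, ← eq_sub_iff_add_eq]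
      norm_num <;>
        simp (disch := omega) only [Fin.ext_iff, Fin.coe_ofNat_eq_mod, Nat.mod_eq_of_lt] <;>
        omega
  exact not_cycleBridgeFriendlyWrt_of_exchange bridges_S bridges_T gaps_S gaps_T new_S new_T
    (hmin 2 h2) (hmin 4 h4) herase (fun h => two_notMem (h ▸ Finset.mem_insert_self _ _))

end Cycle

/-- **Proposition 4.3.** For `n ≥ 3`, the edge ideal of the `n`-cycle is bridge-friendly
iff `n ∈ {3, 5, 6}`. -/
theorem cycle_bridgeFriendly_iff (n : ℕ) (hn : 3 ≤ n) :
    BridgeFriendly (edgeGens (SimpleGraph.cycleGraph n)) ↔ n = 3 ∨ n = 5 ∨ n = 6 := by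
  have : NeZero n := ⟨by omega⟩
  rw [bridgeFriendly_cycleGraph_iff hn]
  constructor
  · rintro ⟨w, hw, h⟩
    by_contra hn'
    obtain rfl | h7 : n = 4 ∨ 7 ≤ n := by omega
    · obtain ⟨j, hj⟩ := exists_forall_lt_add_right hw 0
      exact not_cycleBridgeFriendlyWrt_four hj (h.comp_add_right j)
    · obtain ⟨j, hj⟩ := exists_forall_lt_add_right hw 3
      exact not_cycleBridgeFriendlyWrt_of_seven_le h7 hj (h.comp_add_right j)
  · rintro (rfl | rfl | rfl)
    exacts [⟨_, Fin.val_injective, cycleBridgeFriendlyWrt_val.1⟩,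
      ⟨_, Fin.val_injective, cycleBridgeFriendlyWrt_val.2.1⟩,
      ⟨_, Fin.val_injective, cycleBridgeFriendlyWrt_val.2.2⟩]

end ChauHaMaithani
end
end

section
/- Let M be the minimal generating set of a monomial ideal with a total order ≻, let σ ⊆ M, and let m ∈ M be a gap of σ. Say that m and m' ∈ σ share a factor unique within σ if there exist a variable x and an integer n ≥ 1 such that the exponent of x in m and the exponent of x in m' both equal n, while the exponent of x in every element of σ∖{m'} is strictly less than n. If m divides lcm({m' ∈ σ : m' ≻ m, or m and m' do not share a factor unique within σ}), then m is a true gap of σ. -/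
/-!
Let `m'` be a bridge of `σ ∪ {m}` dominated by `m`. Since `m` is a gap,
`lcm σ = m ⊔ lcm (σ ∖ {m'})`, so `m'` is a bridge of `σ` as soon as `m ∣ lcm (σ ∖ {m'})`.
If `m` and `m'` share no factor unique within `σ`, this holds exponentwise: an exponent of `m`
above `lcm (σ ∖ {m'})` would be attained in `σ` by `m'` alone. If they do share one, `m'` is
excluded from the lcm that `m` divides by hypothesis, which is then a divisor of `lcm (σ ∖ {m'})`.
-/

open scoped Classical

noncomputable section

namespace ChauHaMaithani

variable {V : Type*}

/-- `m` and `m' ∈ σ` share a factor `x^n` unique within `σ`. -/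
def SharesUniqueFactor (σ : Finset (V → ℕ)) (m m' : V → ℕ) : Prop :=
  ∃ (x : V) (n : ℕ), 1 ≤ n ∧ m x = n ∧ m' x = n ∧ ∀ g ∈ σ.erase m', g x < n

section Lemmas

variable {σ : Finset (V → ℕ)} {m m' : V → ℕ}

theorem le_mlcm_of_mem (h : m ∈ σ) : m ≤ mlcm σ :=
  fun v => Finset.le_sup (f := fun g => g v) h

theorem mlcm_mono {τ : Finset (V → ℕ)} (h : σ ⊆ τ) : mlcm σ ≤ mlcm τ :=
  fun _ => Finset.sup_mono h

theorem mlcm_insert : mlcm (insert m σ) = m ⊔ mlcm σ := by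
  funext v
  simp [mlcm, Finset.sup_insert]

theorem mlcm_eq_sup_mlcm_erase (h : m' ∈ σ) : mlcm σ = m' ⊔ mlcm (σ.erase m') := by
  rw [← mlcm_insert, Finset.insert_erase h]

theorem IsGap.sup_mlcm_erase_eq (hgap : IsGap σ m) (hb : IsBridge (insert m σ) m')
    (hne : m' ≠ m) : m ⊔ mlcm (σ.erase m') = mlcm σ := by
  rw [← mlcm_insert, ← Finset.erase_insert_of_ne hne.symm, hb.2, hgap.2]

theorem le_mlcm_erase_of_not_sharesUniqueFactor (hm' : m' ∈ σ)
    (hsplit : m ⊔ mlcm (σ.erase m') = mlcm σ) (hns : ¬ SharesUniqueFactor σ m m') :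
    m ≤ mlcm (σ.erase m') := by
  refine fun v => le_of_not_gt fun (hlt : mlcm (σ.erase m') v < m v) => hns ?_
  have hm'v : m' v = m v := by
    have h₁ := congrFun hsplit v
    have h₂ := congrFun (mlcm_eq_sup_mlcm_erase hm') v
    simp only [Pi.sup_apply] at h₁ h₂
    omega
  exact ⟨v, m v, Nat.one_le_of_lt hlt, rfl, hm'v,
    fun g hg => (le_mlcm_of_mem hg v).trans_lt hlt⟩

end Lemmas

theorem trueGap_of_dvd_lcm_general {V : Type*} (ord : (V → ℕ) → ℕ)
    (σ : Finset (V → ℕ)) (m : V → ℕ) (hgap : IsGap σ m)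
    (hdvd : ∀ v, m v ≤ mlcm (σ.filter fun m' =>
        ord m < ord m' ∨ ¬ SharesUniqueFactor σ m m') v) :
    IsTrueGap ord σ m := by
  refine ⟨hgap, fun m' hb hlt => ?_⟩
  have hne : m' ≠ m := fun h => hlt.ne (congrArg ord h)
  have hm' : m' ∈ σ := (Finset.mem_insert.1 hb.1).resolve_left hne
  have hsplit := hgap.sup_mlcm_erase_eq hb hne
  suffices m ≤ mlcm (σ.erase m') from ⟨hm', by rw [← hsplit, sup_eq_right.2 this]⟩
  by_cases hs : SharesUniqueFactor σ m m'
  · have hsub : (σ.filter fun g => ord m < ord g ∨ ¬ SharesUniqueFactor σ m g) ⊆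
        σ.erase m' := by
      intro g hg
      rw [Finset.mem_filter] at hg
      refine Finset.mem_erase.2 ⟨?_, hg.1⟩
      rintro rfl
      exact hg.2.elim (fun h => (h.asymm hlt).elim) (· hs)
    exact (show m ≤ _ from hdvd).trans (mlcm_mono hsub)
  · exact le_mlcm_erase_of_not_sharesUniqueFactor hm' hsplit hs

/-- **Corollary 2.12.** If a gap `m` of `σ` divides the lcm of the elements of `σ` that
either dominate `m` or share no factor with `m` unique within `σ`, then `m` is a true
gap of `σ`. -/
theorem trueGap_of_dvd_lcm {V : Type*} (M : Finset (V → ℕ)) (ord : (V → ℕ) → ℕ)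
    (σ : Finset (V → ℕ)) (hσ : σ ⊆ M) (m : V → ℕ) (hm : m ∈ M) (hgap : IsGap σ m)
    (hdvd : ∀ v, m v ≤ mlcm (σ.filter fun m' =>
        ord m < ord m' ∨ ¬ SharesUniqueFactor σ m m') v) :
    IsTrueGap ord σ m :=
  trueGap_of_dvd_lcm_general ord σ m hgap hdvd

end ChauHaMaithani
end
end
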